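/- arXiv:1002.3533 — 2 statements merged into one kernel-verified Lean document; each statement's English description precedes it below -/
import Mathlib

section
/- Under Assumption A with N(x) = 1/γ³, the approximate refraction coefficient converges to the desired one at the ball centers: lim_{m→∞} max_{1≤l≤(mP)³} |n²(x_l) - n²_{a_{mP}}(x_l)| = 0. -/
/-!
Multiplying the defining equation `1/(mP) - 2a = γ a^e` of the radius `a = a_{mP}` (with
`e = (2-κ)/3 ∈ (0,1)`) by `mP` gives `γ mP a^e = 1 - 2 a mP`, and `a mP ≤ (a mP)^e ≤ (mP)^(e-1)/γ → 0`.
Hence the scaling factor `γ mP a^e` tends to `1`, and since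
`n² - n²_a = k⁻² p ((γ mP a^e)³ - 1)` with `p` bounded on `D`, the maximum over the centres tends to `0`.
-/

open Filter Topology

section RadiusEquation

variable {γ e N a : ℝ}

lemma mul_rpow_eq_one_sub_of_radius_eq (hN : N ≠ 0) (h : 1 / N - 2 * a = γ * a ^ e) :
    γ * N * a ^ e = 1 - 2 * (a * N) := by
  rw [mul_right_comm, ← h]
  field_simp

lemma mul_le_rpow_sub_one_div_of_radius_eq (hγ : 0 < γ) (he : e ≤ 1) (hN : 0 < N) (ha : 0 < a)
    (h : 1 / N - 2 * a = γ * a ^ e) :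
    a * N ≤ N ^ (e - 1) / γ := by
  have hscale := mul_rpow_eq_one_sub_of_radius_eq hN.ne' h
  have hpos : 0 < γ * N * a ^ e := by positivity
  calc a * N ≤ (a * N) ^ e := Real.self_le_rpow_of_le_one (by positivity) (by linarith) he
    _ = a ^ e * N ^ e := Real.mul_rpow ha.le hN.le
    _ ≤ 1 / (γ * N) * N ^ e := by
        gcongr
        rw [le_div_iff₀ (by positivity)]
        nlinarith [mul_pos ha hN]
    _ = N ^ (e - 1) / γ := by
        rw [Real.rpow_sub hN, Real.rpow_one]
        field_simp

end RadiusEquation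

lemma tendsto_radius_scale_one {γ e : ℝ} (hγ : 0 < γ) (he : e < 1) {P : ℕ}
    (hP : 1 ≤ P) {a : ℕ → ℝ}
    (ha : ∀ m : ℕ, 1 ≤ m → 0 < a m ∧ 1 / ((m : ℝ) * P) - 2 * a m = γ * a m ^ e) :
    Tendsto (fun m : ℕ => γ * m * P * a m ^ e) atTop (𝓝 1) := by
  have hP₀ : (0 : ℝ) < P := by exact_mod_cast hP
  have hN : Tendsto (fun m : ℕ => (m : ℝ) * P) atTop atTop :=
    tendsto_natCast_atTop_atTop.atTop_mul_const hP₀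
  have hbound : Tendsto (fun m : ℕ => ((m : ℝ) * P) ^ (e - 1) / γ) atTop (𝓝 0) := by
    simpa [neg_sub] using ((tendsto_rpow_neg_atTop (y := 1 - e) (by linarith)).comp hN).div_const γ
  have hmP : ∀ m : ℕ, 1 ≤ m → (0 : ℝ) < m * P := fun m hm => mul_pos (Nat.cast_pos.mpr hm) hP₀
  have hsmall : Tendsto (fun m : ℕ => a m * ((m : ℝ) * P)) atTop (𝓝 0) := by
    refine squeeze_zero' ?_ ?_ hbound
    · filter_upwards [eventually_ge_atTop 1] with m hm
      exact (mul_pos (ha m hm).1 (hmP m hm)).le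
    · filter_upwards [eventually_ge_atTop 1] with m hm
      exact mul_le_rpow_sub_one_div_of_radius_eq hγ he.le (hmP m hm) (ha m hm).1 (ha m hm).2
  have hlim : Tendsto (fun m : ℕ => 1 - 2 * (a m * ((m : ℝ) * P))) atTop (𝓝 1) := by
    simpa using (hsmall.const_mul 2).const_sub 1
  refine hlim.congr' ?_
  filter_upwards [eventually_ge_atTop 1] with m hm
  rw [← mul_rpow_eq_one_sub_of_radius_eq (hmP m hm).ne' (ha m hm).2]
  ring

lemma norm_sub_sub_scaled_contrast {k : ℝ} (hk : k ≠ 0) {n₀ n p : ℂ} (hp : p = (k : ℂ) ^ 2 * (n₀ - n))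
    (c : ℝ) :
    ‖n - (n₀ - (k : ℂ) ^ (-2 : ℤ) * p * (c : ℂ) ^ 3)‖ = k ^ (-2 : ℤ) * ‖p‖ * |c ^ 3 - 1| := by
  have hk' : (k : ℂ) ≠ 0 := by exact_mod_cast hk
  have hdiff : n - (n₀ - (k : ℂ) ^ (-2 : ℤ) * p * (c : ℂ) ^ 3)
      = (k : ℂ) ^ (-2 : ℤ) * p * ((c ^ 3 - 1 : ℝ) : ℂ) := by
    rw [hp, zpow_neg]
    push_cast
    field_simp
    ring
  rw [hdiff, norm_mul, norm_mul, norm_zpow, Complex.norm_real, Complex.norm_real,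
    Real.norm_eq_abs, Real.norm_eq_abs, (even_neg.mpr even_two).zpow_abs]

lemma tendsto_iSup_zero_of_le {ι : ℕ → Type*} {f : (m : ℕ) → ι m → ℝ} {B : ℕ → ℝ}
    (hf : ∀ m i, 0 ≤ f m i) (hfB : ∀ᶠ m in atTop, ∀ i, f m i ≤ B m)
    (hB : Tendsto B atTop (𝓝 0)) :
    Tendsto (fun m => ⨆ i, f m i) atTop (𝓝 0) := by
  have hmax : Tendsto (fun m => max (B m) 0) atTop (𝓝 0) := by
    simpa using hB.max (tendsto_const_nhds (x := (0 : ℝ)))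
  refine squeeze_zero' (.of_forall fun m => Real.iSup_nonneg (hf m)) ?_ hmax
  filter_upwards [hfB] with m hm
  exact Real.iSup_le (fun i => (hm i).trans (le_max_left _ _)) (le_max_right _ _)

theorem stmt_14_general (k γ κ : ℝ) (hk : 0 < k) (hγ : 0 < γ) (hκ : κ ∈ Set.Ioo (0:ℝ) 1)
    (P : ℕ) (hP : 1 ≤ P) (a : ℕ → ℝ)
    (ha : ∀ m : ℕ, 1 ≤ m → 0 < a m ∧
      1 / ((m : ℝ) * P) - 2 * a m = γ * (a m) ^ ((2 - κ) / 3))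
    (D : Set (EuclideanSpace ℝ (Fin 3)))
    (n0sq nsq p : EuclideanSpace ℝ (Fin 3) → ℂ)
    (hp : ∀ x, p x = (k : ℂ) ^ 2 * (n0sq x - nsq x))
    (nasq : ℕ → EuclideanSpace ℝ (Fin 3) → ℂ)
    (hnasq : ∀ m x, nasq m x =
      n0sq x - (k : ℂ) ^ (-2 : ℤ) * p x *
        (((γ * m * P * (a m) ^ ((2 - κ) / 3)) : ℝ) : ℂ) ^ 3)
    (pnorm : ℝ) (hpnorm : ∀ x ∈ D, ‖p x‖ ≤ pnorm)
    (xc : (m : ℕ) → Fin ((m * P) ^ 3) → EuclideanSpace ℝ (Fin 3))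
    (hxc : ∀ m l, xc m l ∈ D) :
    Tendsto (fun m : ℕ =>
        ⨆ l : Fin ((m * P) ^ 3), ‖nsq (xc m l) - nasq m (xc m l)‖)
      atTop (nhds 0) := by
  have hscale := tendsto_radius_scale_one hγ (by linarith [hκ.1]) hP ha
  have hbound : Tendsto (fun m : ℕ => k ^ (-2 : ℤ) * pnorm *
      |(γ * m * P * a m ^ ((2 - κ) / 3)) ^ 3 - 1|) atTop (𝓝 0) := by
    simpa using (((hscale.pow 3).sub_const 1).abs).const_mul (k ^ (-2 : ℤ) * pnorm)
  refine tendsto_iSup_zero_of_le (fun _ _ => norm_nonneg _) (.of_forall fun m l => ?_) hbound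
  rw [hnasq, norm_sub_sub_scaled_contrast hk.ne' (hp _)]
  gcongr
  exact hpnorm _ (hxc m l)

theorem stmt_14 (k γ κ : ℝ) (hk : 0 < k) (hγ : 0 < γ) (hκ : κ ∈ Set.Ioo (0:ℝ) 1)
    (P : ℕ) (hP : 1 ≤ P) (a : ℕ → ℝ)
    (ha : ∀ m : ℕ, 1 ≤ m → 0 < a m ∧
      1 / ((m : ℝ) * P) - 2 * a m = γ * (a m) ^ ((2 - κ) / 3))
    (D : Set (EuclideanSpace ℝ (Fin 3)))
    (hD : D = {y | ∀ i : Fin 3, y i ∈ Set.Icc (0:ℝ) 1})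
    (n0sq nsq p : EuclideanSpace ℝ (Fin 3) → ℂ)
    (hp : ∀ x, p x = (k : ℂ) ^ 2 * (n0sq x - nsq x))
    (nasq : ℕ → EuclideanSpace ℝ (Fin 3) → ℂ)
    (hnasq : ∀ m x, nasq m x =
      n0sq x - (k : ℂ) ^ (-2 : ℤ) * p x *
        (((γ * m * P * (a m) ^ ((2 - κ) / 3)) : ℝ) : ℂ) ^ 3)
    (pnorm : ℝ) (hpnorm : ∀ x ∈ D, ‖p x‖ ≤ pnorm)
    (xc : (m : ℕ) → Fin ((m * P) ^ 3) → EuclideanSpace ℝ (Fin 3))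
    (hxc : ∀ m l, xc m l ∈ D) :
    Tendsto (fun m : ℕ =>
        ⨆ l : Fin ((m * P) ^ 3), ‖nsq (xc m l) - nasq m (xc m l)‖)
      atTop (nhds 0) :=
  stmt_14_general k γ κ hk hγ hκ P hP a ha D n0sq nsq p hp nasq hnasq pnorm hpnorm xc hxc
end

section
/- Let k > 0, κ ∈ (0,1), γ > 0, P ∈ ℕ fixed, and let a_m denote the unique positive root of γ·a^((2-κ)/3) + 2a = 1/(mP). Then |1 - γ³·(mP)³·a_m^(2-κ)| → 0 as m → ∞, and hence for every ε > 0 there exists a minimal m ∈ ℕ such that ‖p‖_∞·|1 - γ³·(mP)³·a_m^(2-κ)| ≤ ε, for any fixed bounded function p. -/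
open Filter

lemma aux_eq (γ κ : ℝ) (hγ : 0 < γ) (t c : ℝ) (ht : 0 < t) (hc : 0 < c)
    (heq : γ * t ^ ((2 - κ) / 3) + 2 * t = 1 / c) :
    γ ^ 3 * c ^ 3 * t ^ (2 - κ) = ((1 + (2 / γ) * t ^ ((1 + κ) / 3))⁻¹) ^ 3 := by
  set s := t ^ ((2 - κ) / 3) with hs_def
  have hs : 0 < s := Real.rpow_pos_of_pos ht _
  have hts : t ^ ((1 + κ) / 3) * s = t := by
    rw [hs_def, ← Real.rpow_add ht]
    norm_num
    rw [show (1 + κ) / 3 + (2 - κ) / 3 = 1 by ring, Real.rpow_one]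
  have h2 : 1 + (2 / γ) * t ^ ((1 + κ) / 3) = (γ * s + 2 * t) / (γ * s) := by
    rw [eq_div_iff (by positivity)]
    field_simp
    nlinarith [hts]
  have h3 : (1 + (2 / γ) * t ^ ((1 + κ) / 3))⁻¹ = γ * s * c := by
    rw [h2, heq]
    field_simp
  have hs3 : s ^ 3 = t ^ (2 - κ) := by
    rw [hs_def, ← Real.rpow_natCast (t ^ ((2 - κ) / 3)) 3, ← Real.rpow_mul ht.le]
    norm_num
  rw [h3, mul_pow, mul_pow, hs3]
  ring

theorem stmt_19 (k γ κ : ℝ) (hk : 0 < k) (hγ : 0 < γ) (hκ : κ ∈ Set.Ioo (0:ℝ) 1)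
    (P : ℕ) (hP : 1 ≤ P) (a : ℕ → ℝ)
    (ha : ∀ m : ℕ, 1 ≤ m → 0 < a m ∧
      γ * (a m) ^ ((2 - κ) / 3) + 2 * a m = 1 / ((m : ℝ) * P)) :
    Tendsto (fun m : ℕ => |1 - γ ^ 3 * ((m : ℝ) * P) ^ 3 * (a m) ^ (2 - κ)|)
      atTop (nhds 0) ∧
    ∀ ε : ℝ, 0 < ε → ∀ Cp : ℝ, 0 ≤ Cp →
      ∃ m : ℕ, 1 ≤ m ∧
        Cp * |1 - γ ^ 3 * ((m : ℝ) * P) ^ 3 * (a m) ^ (2 - κ)| ≤ ε ∧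
        ∀ m' : ℕ, 1 ≤ m' →
          Cp * |1 - γ ^ 3 * ((m' : ℝ) * P) ^ 3 * (a m') ^ (2 - κ)| ≤ ε → m ≤ m' := by
  obtain ⟨hκ0, hκ1⟩ := hκ
  -- a tends to 0
  have hPpos : (0:ℝ) < P := by exact_mod_cast hP
  have ha0 : Tendsto a atTop (nhds 0) := by
    have hub : ∀ᶠ m : ℕ in atTop, a m ≤ 1 / (m : ℝ) := by
      filter_upwards [eventually_ge_atTop 1] with m hm
      obtain ⟨hpos, heq⟩ := ha m hm
      have hmP : (0:ℝ) < (m : ℝ) * P := by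
        have : (1:ℝ) ≤ (m : ℝ) := by exact_mod_cast hm
        positivity
      have h1 : 2 * a m ≤ 1 / ((m : ℝ) * P) := by
        nlinarith [Real.rpow_pos_of_pos hpos ((2 - κ) / 3)]
      have h2 : 1 / ((m : ℝ) * P) ≤ 1 / (m : ℝ) := by
        apply one_div_le_one_div_of_le
        · exact_mod_cast Nat.lt_of_lt_of_le Nat.zero_lt_one hm
        · nlinarith [show (1:ℝ) ≤ (P:ℝ) by exact_mod_cast hP, show (0:ℝ) ≤ (m:ℝ) from Nat.cast_nonneg m]
      nlinarith
    have hlb : ∀ᶠ m : ℕ in atTop, 0 ≤ a m := by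
      filter_upwards [eventually_ge_atTop 1] with m hm
      exact (ha m hm).1.le
    exact tendsto_of_tendsto_of_tendsto_of_le_of_le' tendsto_const_nhds
      tendsto_one_div_atTop_nhds_zero_nat hlb hub
  -- continuous function F
  set F : ℝ → ℝ := fun x => |1 - ((1 + (2 / γ) * x ^ ((1 + κ) / 3))⁻¹) ^ 3| with hF
  have hF0 : F 0 = 0 := by
    simp [hF, Real.zero_rpow (by positivity : (1 + κ) / 3 ≠ 0)]
  have hFc : ContinuousAt F 0 := by
    have h1 : ContinuousAt (fun x : ℝ => x ^ ((1 + κ) / 3)) 0 :=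
      Real.continuousAt_rpow_const 0 _ (Or.inr (by positivity))
    have h2 : ContinuousAt (fun x : ℝ => 1 + (2 / γ) * x ^ ((1 + κ) / 3)) 0 :=
      (continuousAt_const.mul h1).const_add 1
    have hne : (1 + (2 / γ) * (0:ℝ) ^ ((1 + κ) / 3)) ≠ 0 := by
      rw [Real.zero_rpow (by positivity : (1 + κ) / 3 ≠ 0)]
      norm_num
    have h3 : ContinuousAt (fun x : ℝ => (1 + (2 / γ) * x ^ ((1 + κ) / 3))⁻¹) 0 :=
      h2.inv₀ hne
    exact (continuousAt_const.sub (h3.pow 3)).abs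
  have hcomp : Tendsto (fun m => F (a m)) atTop (nhds 0) := by
    have := hFc.tendsto.comp ha0
    rwa [hF0] at this
  have hkey : ∀ m : ℕ, 1 ≤ m →
      |1 - γ ^ 3 * ((m : ℝ) * P) ^ 3 * (a m) ^ (2 - κ)| = F (a m) := by
    intro m hm
    obtain ⟨hpos, heq⟩ := ha m hm
    have hmP : (0:ℝ) < (m : ℝ) * P := by
      have : (1:ℝ) ≤ (m : ℝ) := by exact_mod_cast hm
      positivity
    have hid := aux_eq γ κ hγ (a m) ((m : ℝ) * P) hpos hmP heq
    rw [hF, hid]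
  have htt : Tendsto (fun m : ℕ => |1 - γ ^ 3 * ((m : ℝ) * P) ^ 3 * (a m) ^ (2 - κ)|)
      atTop (nhds 0) := by
    apply hcomp.congr'
    filter_upwards [eventually_ge_atTop 1] with m hm
    exact (hkey m hm).symm
  refine ⟨htt, fun ε hε Cp hCp => ?_⟩
  have htt2 : Tendsto (fun m : ℕ => Cp * |1 - γ ^ 3 * ((m : ℝ) * P) ^ 3 * (a m) ^ (2 - κ)|)
      atTop (nhds 0) := by
    simpa using htt.const_mul Cp
  have hev : ∀ᶠ m : ℕ in atTop,
      Cp * |1 - γ ^ 3 * ((m : ℝ) * P) ^ 3 * (a m) ^ (2 - κ)| ≤ ε := by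
    filter_upwards [htt2.eventually (eventually_le_nhds hε)] with m hm using hm
  obtain ⟨m₀, hm₀⟩ := (hev.and (eventually_ge_atTop 1)).exists
  classical
  have hne : ∃ m : ℕ, 1 ≤ m ∧
      Cp * |1 - γ ^ 3 * ((m : ℝ) * P) ^ 3 * (a m) ^ (2 - κ)| ≤ ε :=
    ⟨m₀, hm₀.2, hm₀.1⟩
  refine ⟨Nat.find hne, (Nat.find_spec hne).1, (Nat.find_spec hne).2,
    fun m' h1 h2 => Nat.find_min' hne ⟨h1, h2⟩⟩
end
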